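/- arXiv:1109.0189 — 2 statements merged into one kernel-verified Lean document; each statement's English description precedes it below -/
import Mathlib

section
/- For a finite graph G=(S,B), integers q ≥ 1, r ≥ 0 and β > 0, the (q,r)-Potts partition function Z_β(G) = Σ_{σ: S→{1,…,q+r}} exp(β · #{ {i,j} ∈ B : σ_i = σ_j ≤ q }) satisfies Z_β(G) = e^{β|B|} · Σ_{X⊆B} p^{|X|} (1-p)^{|B∖X|} (q+r)^{κ₀(S,X)} q^{κ₁(S,X)}, where p = 1 - e^{-β}. -/
open scoped Classical

/-- number of isolated vertices of the graph `(V, X)`. -/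
noncomputable def kappa0 {V : Type} [Fintype V] (X : Finset (Sym2 V)) : ℕ :=
  Nat.card {v : V // ∀ e ∈ X, v ∉ e}

/-- number of connected components of `(V, X)` with at least two vertices. -/
noncomputable def kappa1 {V : Type} [Fintype V] (X : Finset (Sym2 V)) : ℕ :=
  Nat.card {c : (SimpleGraph.fromEdgeSet (X : Set (Sym2 V))).ConnectedComponent //
    1 < Nat.card c.supp}

/-!
Expanding `exp (β · 1[σ_i = σ_j ≤ q]) = 1 + (e^β - 1) · 1[σ_i = σ_j ≤ q]` over the edges gives
`Z_β(G) = ∑_{X ⊆ B} (e^β - 1)^{|X|} · N(X)`, where `N(X)` counts the colourings that are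
constant on each edge of `X` with a colour `≤ q`. Such a colouring amounts to a colour in
`{1,…,q}` for each component of `(S, X)` with an edge and a colour in `{1,…,q+r}` for each
isolated vertex, so `N(X) = (q+r)^{κ₀} q^{κ₁}`; finally `e^β - 1 = e^β p` and `e^{-β} = 1 - p`.
-/

open Finset SimpleGraph

theorem pow_card_eq_sum_powerset {R α : Type*} [CommRing R] (s : Finset α) (a : R) :
    a ^ #s = ∑ X ∈ s.powerset, (a - 1) ^ #X := by
  calc a ^ #s = ∏ _ ∈ s, ((a - 1) + 1) := by rw [prod_const, sub_add_cancel]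
    _ = ∑ X ∈ s.powerset, ∏ _ ∈ X, (a - 1) := prod_add_one s
    _ = ∑ X ∈ s.powerset, (a - 1) ^ #X := sum_congr rfl fun X _ => prod_const _

theorem Nat.card_subtype_forall_imp_mem {α β : Type*} [Finite α] [Finite β] (P : α → Prop)
    (s : Set β) :
    Nat.card {f : α → β // ∀ a, P a → f a ∈ s} =
      Nat.card s ^ Nat.card {a // P a} * Nat.card β ^ Nat.card {a // ¬ P a} := by
  have := Fintype.ofFinite α
  have := Fintype.ofFinite β
  calc Nat.card {f : α → β // ∀ a, P a → f a ∈ s}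
      = #(Fintype.piFinset fun a => if P a then s.toFinset else univ) := by
        rw [Nat.card_eq_fintype_card, Fintype.card_subtype]
        congr 1
        ext f
        simp only [mem_filter, mem_univ, true_and, Fintype.mem_piFinset]
        refine forall_congr' fun a => ?_
        split_ifs <;> simp [*]
    _ = _ := by
        rw [Fintype.card_piFinset]
        simp only [apply_ite card]
        rw [prod_ite, prod_const, prod_const]
        simp [Nat.card_eq_fintype_card, Fintype.card_subtype, Set.toFinset_card]

theorem Nat.card_subtype_fin_val_lt (q r : ℕ) :
    Nat.card {x : Fin (q + r) // (x : ℕ) < q} = q := by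
  rw [Nat.card_eq_fintype_card, Fintype.card_subtype, Fin.card_filter_val_lt]
  omega

namespace SimpleGraph

variable {V : Type*} {G : SimpleGraph V}

theorem Reachable.apply_eq_of_forall_adj {β : Type*} {σ : V → β}
    (hσ : ∀ v w, G.Adj v w → σ v = σ w) {v w : V} (h : G.Reachable v w) : σ v = σ w := by
  obtain ⟨p⟩ := h
  induction p with
  | nil => rfl
  | cons hadj _ ih => exact (hσ _ _ hadj).trans ih

theorem reachable_iff_eq_of_notMem_support {v w : V} (hv : v ∉ G.support) :
    G.Reachable v w ↔ v = w := by
  refine ⟨fun ⟨p⟩ => ?_, fun h => h ▸ Reachable.refl v⟩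
  cases p with
  | nil => rfl
  | cons hadj _ => exact absurd ((mem_support G).2 ⟨_, hadj⟩) hv

theorem one_lt_card_supp_iff_mem_support [Finite V] (v : V) :
    1 < Nat.card (G.connectedComponentMk v).supp ↔ v ∈ G.support := by
  rw [Finite.one_lt_card_iff_nontrivial]
  constructor
  · intro h
    by_contra hv
    have : (G.connectedComponentMk v).supp = {v} := by
      ext w
      rw [ConnectedComponent.mem_supp_iff, ConnectedComponent.eq, Set.mem_singleton_iff,
        reachable_comm, reachable_iff_eq_of_notMem_support hv, eq_comm]
    rw [this] at h
    exact not_nontrivial _ h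
  · rintro ⟨w, hvw⟩
    exact ⟨⟨v, rfl⟩, ⟨w, ConnectedComponent.sound hvw.symm.reachable⟩,
      fun h => hvw.ne (congrArg Subtype.val h)⟩

noncomputable def isolatedVerticesEquiv [Finite V] :
    {v // v ∉ G.support} ≃ {c : G.ConnectedComponent // ¬ 1 < Nat.card c.supp} :=
  Equiv.ofBijective
    (fun v => ⟨G.connectedComponentMk v, (one_lt_card_supp_iff_mem_support v.1).not.2 v.2⟩)
    ⟨fun v _ h => Subtype.ext <| (reachable_iff_eq_of_notMem_support v.2).1 <|
        ConnectedComponent.exact (congrArg Subtype.val h),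
      fun ⟨c, hc⟩ => c.ind
        (fun v hv => ⟨⟨v, (one_lt_card_supp_iff_mem_support v).not.1 hv⟩, rfl⟩) hc⟩

noncomputable def componentColouringEquiv [Finite V] {β : Type*} (s : Set β) :
    {σ : V → β // (∀ v w, G.Adj v w → σ v = σ w) ∧ ∀ v ∈ G.support, σ v ∈ s} ≃
      {f : G.ConnectedComponent → β // ∀ c, 1 < Nat.card c.supp → f c ∈ s} where
  toFun σ := ⟨ConnectedComponent.lift σ.1 fun _ _ p _ =>
      p.reachable.apply_eq_of_forall_adj σ.2.1,
    fun c => c.ind fun v hv => σ.2.2 v ((one_lt_card_supp_iff_mem_support v).1 hv)⟩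
  invFun f := ⟨fun v => f.1 (G.connectedComponentMk v),
    fun _ _ h => congrArg f.1 (ConnectedComponent.sound h.reachable),
    fun v hv => f.2 _ ((one_lt_card_supp_iff_mem_support v).2 hv)⟩
  left_inv _ := rfl
  right_inv _ := Subtype.ext <| funext fun c => c.ind fun _ => rfl

theorem mem_support_fromEdgeSet_iff {X : Set (Sym2 V)} (hX : ∀ e ∈ X, ¬ e.IsDiag) {v : V} :
    v ∈ (fromEdgeSet X).support ↔ ∃ e ∈ X, v ∈ e := by
  simp only [mem_support, fromEdgeSet_adj]
  constructor
  · rintro ⟨w, hvw, -⟩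
    exact ⟨_, hvw, Sym2.mem_mk_left v w⟩
  · rintro ⟨e, he, hv⟩
    obtain ⟨w, rfl⟩ := Sym2.mem_iff_exists.mp hv
    exact ⟨w, he, fun h => hX _ he (Sym2.mk_isDiag_iff.2 h)⟩

theorem fromEdgeSet_monochromatic_iff {X : Set (Sym2 V)} (hX : ∀ e ∈ X, ¬ e.IsDiag)
    {β : Type*} (σ : V → β) (s : Set β) :
    (∀ e ∈ X, ∀ i ∈ e, ∀ j ∈ e, σ i = σ j ∧ σ i ∈ s) ↔
      (∀ v w, (fromEdgeSet X).Adj v w → σ v = σ w) ∧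
        ∀ v ∈ (fromEdgeSet X).support, σ v ∈ s := by
  simp only [mem_support_fromEdgeSet_iff hX, fromEdgeSet_adj]
  constructor
  · intro h
    exact ⟨fun v w hvw => (h _ hvw.1 v (Sym2.mem_mk_left v w) w (Sym2.mem_mk_right v w)).1,
      fun v ⟨e, he, hv⟩ => (h e he v hv v hv).2⟩
  · rintro ⟨hadj, hs⟩ e he i hi j hj
    refine ⟨?_, hs i ⟨e, he, hi⟩⟩
    obtain ⟨k, rfl⟩ := Sym2.mem_iff_exists.mp hi
    rcases Sym2.mem_iff.mp hj with rfl | rfl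
    · rfl
    · exact hadj _ _ ⟨he, fun h => hX _ he (Sym2.mk_isDiag_iff.2 h)⟩

end SimpleGraph

def PottsCompatible {V : Type} (q : ℕ) {r : ℕ} (X : Finset (Sym2 V)) (σ : V → Fin (q + r)) :
    Prop :=
  ∀ e ∈ X, ∀ i ∈ e, ∀ j ∈ e, σ i = σ j ∧ (σ i : ℕ) < q

theorem card_pottsCompatible {V : Type} [Fintype V] {X : Finset (Sym2 V)}
    (hX : ∀ e ∈ X, ¬ e.IsDiag) (q r : ℕ) :
    Nat.card {σ : V → Fin (q + r) // PottsCompatible q X σ} =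
      (q + r) ^ kappa0 X * q ^ kappa1 X := by
  have hsupp (v : V) : v ∉ (fromEdgeSet (X : Set (Sym2 V))).support ↔ ∀ e ∈ X, v ∉ e := by
    rw [mem_support_fromEdgeSet_iff hX]
    simp
  have hκ₀ : kappa0 X =
      Nat.card {c : (fromEdgeSet (X : Set (Sym2 V))).ConnectedComponent // ¬ 1 < Nat.card c.supp} :=
    Nat.card_congr ((Equiv.subtypeEquivRight fun v => (hsupp v).symm).trans
      isolatedVerticesEquiv)
  have hcolour : {σ : V → Fin (q + r) // PottsCompatible q X σ} ≃
      {f : (fromEdgeSet (X : Set (Sym2 V))).ConnectedComponent → Fin (q + r) //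
        ∀ c, 1 < Nat.card c.supp → f c ∈ {x : Fin (q + r) | (x : ℕ) < q}} :=
    (Equiv.subtypeEquivRight fun σ =>
      fromEdgeSet_monochromatic_iff hX σ {x : Fin (q + r) | (x : ℕ) < q}).trans
      (componentColouringEquiv _)
  rw [Nat.card_congr hcolour, Nat.card_subtype_forall_imp_mem, hκ₀,
    Nat.card_eq_fintype_card (α := Fin (q + r)), Fintype.card_fin, mul_comm]
  congr 2
  exact Nat.card_subtype_fin_val_lt q r

theorem exp_mul_mul_one_sub_exp_neg_pow (β : ℝ) {k n : ℕ} (hkn : k ≤ n) :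
    Real.exp (β * n) * ((1 - Real.exp (-β)) ^ k * Real.exp (-β) ^ (n - k)) =
      (Real.exp β - 1) ^ k := by
  have hexp : Real.exp (β * n) = Real.exp β ^ k * Real.exp β ^ (n - k) := by
    rw [pow_mul_pow_sub _ hkn, mul_comm, Real.exp_nat_mul]
  have hinv : Real.exp β * Real.exp (-β) = 1 := by
    rw [← Real.exp_add, add_neg_cancel, Real.exp_zero]
  calc _ = (Real.exp β * (1 - Real.exp (-β))) ^ k * (Real.exp β * Real.exp (-β)) ^ (n - k) := by
        rw [mul_pow, mul_pow, hexp]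
        ring
    _ = (Real.exp β - 1) ^ k := by rw [hinv, one_pow, mul_one, mul_sub, hinv, mul_one]

theorem stmt_1_general (V : Type) [Fintype V] (B : Finset (Sym2 V)) (hB : ∀ e ∈ B, ¬ e.IsDiag)
    (q r : ℕ) (β : ℝ) (p : ℝ) (hp : p = 1 - Real.exp (-β)) :
    ∑ σ : V → Fin (q + r), Real.exp (β *
        (B.filter (fun e => ∀ i ∈ e, ∀ j ∈ e, σ i = σ j ∧ (σ i : ℕ) < q)).card) =
      Real.exp (β * B.card) * ∑ X ∈ B.powerset,
        p ^ X.card * (1 - p) ^ (B \ X).card *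
          (q + r : ℝ) ^ kappa0 X * (q : ℝ) ^ kappa1 X := by
  have hexpand (S : Finset (Sym2 V)) :
      Real.exp (β * #S) = ∑ X ∈ S.powerset, (Real.exp β - 1) ^ #X := by
    rw [mul_comm, Real.exp_nat_mul, pow_card_eq_sum_powerset]
  rw [sum_congr rfl fun σ _ => hexpand _, sum_comm' (t' := B.powerset)
    (s' := fun X => univ.filter (PottsCompatible q X))
    (fun σ X => by
      simp only [PottsCompatible, mem_univ, mem_powerset, mem_filter, subset_iff]
      grind), mul_sum]
  refine sum_congr rfl fun X hX => ?_
  have hXB := mem_powerset.1 hX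
  rw [sum_const, nsmul_eq_mul, ← Fintype.card_subtype, ← Nat.card_eq_fintype_card,
    card_pottsCompatible fun e he => hB e (hXB he), card_sdiff_of_subset hXB, hp, sub_sub_cancel,
    ← exp_mul_mul_one_sub_exp_neg_pow β (card_le_card hXB)]
  push_cast
  ring

/-- the (q,r)-Potts partition function equals
`e^{β|B|}` times the `r`-biased random-cluster partition function with
`p = 1 - e^{-β}`. -/
theorem stmt_1 (V : Type) [Fintype V] (B : Finset (Sym2 V)) (hB : ∀ e ∈ B, ¬ e.IsDiag)
    (q r : ℕ) (hq : 1 ≤ q) (β : ℝ) (hβ : 0 < β) (p : ℝ) (hp : p = 1 - Real.exp (-β)) :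
    ∑ σ : V → Fin (q + r), Real.exp (β *
        (B.filter (fun e => ∀ i ∈ e, ∀ j ∈ e, σ i = σ j ∧ (σ i : ℕ) < q)).card) =
      Real.exp (β * B.card) * ∑ X ∈ B.powerset,
        p ^ X.card * (1 - p) ^ (B \ X).card *
          (q + r : ℝ) ^ kappa0 X * (q : ℝ) ^ kappa1 X :=
  stmt_1_general V B hB q r β p hp
end

section
/- Let X be a finite subset of edges of a square Λ in ℤ² that contains no edge touching the boundary layer (disordered boundary condition). Then 2·|B(Λ)∖X| = 4·κ₀(S(Λ),X) + Σ_{γ∈∂_X} |γ| − |∂̄B(Λ)|, where κ₀(S(Λ),X) is the number of vertices of Λ incident to no edge of X, ∂_X is the contour family of X (the set of incident pairs (i,b) with i a vertex touching X and b ∉ X a missing edge incident to i), and ∂̄B(Λ) = {(i,b) : i ∈ S(Λ), b ∉ B(Λ), i incident to b}. -/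
/-!
Double counting of incident pairs `(i, b)`. The pairs with `b ∈ B(Λ_{n+1}) ∖ X` number
`2 |B(Λ_{n+1}) ∖ X|`; those whose vertex touches `X` form `∂_X`, and the others are exactly the
pairs of an untouched vertex of `Λ_{n+1}` with a bond of `B(Λ_{n+1})`. Each untouched vertex lies
on four lattice bonds, and its bonds leaving `B(Λ_{n+1})` make up all of `∂̄B(Λ_{n+1})`: since
`X ⊆ B(Λ_n)`, a vertex touching `X` lies in `Λ_n`, and all its bonds stay inside `B(Λ_{n+1})`.
-/

/-- nearest-neighbour adjacency on the square lattice ℤ². -/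
def latAdj (v w : ℤ × ℤ) : Prop :=
  (v.1 = w.1 ∧ (v.2 - w.2).natAbs = 1) ∨ (v.2 = w.2 ∧ (v.1 - w.1).natAbs = 1)

/-- `e` is a bond of the lattice ℤ². -/
def isBond (e : Sym2 (ℤ × ℤ)) : Prop := ∃ v w, latAdj v w ∧ e = s(v, w)

/-- the vertex set `S(Λ_n)` of the `(2n+1)×(2n+1)` central square. -/
def latSq (n : ℕ) : Set (ℤ × ℤ) := {v | |v.1| ≤ (n : ℤ) ∧ |v.2| ≤ (n : ℤ)}

/-- the bond set `B(Λ_n)`: bonds with both endpoints in `S(Λ_n)`. -/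
def bonds (n : ℕ) : Set (Sym2 (ℤ × ℤ)) := {e | isBond e ∧ ∀ v ∈ e, v ∈ latSq n}

section FiberCounting

variable {α β : Type*} {f : α → β} {s : Set α} {t : Set β} {k : ℕ}

theorem Set.Finite.of_mapsTo_of_ncard_fiber (hk : k ≠ 0) (ht : t.Finite) (hf : Set.MapsTo f s t)
    (hfib : ∀ b ∈ t, {a ∈ s | f a = b}.ncard = k) : s.Finite := by
  have hfib_finite : ∀ b ∈ t, {a ∈ s | f a = b}.Finite := fun b hb =>
    Set.finite_of_ncard_ne_zero ((hfib b hb).trans_ne hk)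
  exact (ht.biUnion hfib_finite).subset fun a ha => Set.mem_biUnion (hf ha) ⟨ha, rfl⟩

theorem Set.ncard_eq_ncard_mul_of_ncard_fiber (hk : k ≠ 0) (ht : t.Finite)
    (hf : Set.MapsTo f s t) (hfib : ∀ b ∈ t, {a ∈ s | f a = b}.ncard = k) :
    s.ncard = t.ncard * k := by
  classical
  lift s to Finset α using Set.Finite.of_mapsTo_of_ncard_fiber hk ht hf hfib
  lift t to Finset β using ht
  rw [Set.ncard_coe_finset, Set.ncard_coe_finset, Finset.card_eq_sum_card_fiberwise hf]
  refine Finset.sum_const_nat fun b hb => ?_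
  rw [← hfib b hb, ← Set.ncard_coe_finset, Finset.coe_filter]
  rfl

end FiberCounting

theorem Sym2.ncard_setOf_mem_of_not_isDiag {α : Type*} {z : Sym2 α} (hz : ¬z.IsDiag) :
    {a | a ∈ z}.ncard = 2 := by
  classical
  rw [← Sym2.card_toFinset_of_not_isDiag z hz, ← Set.ncard_coe_finset]
  congr 1
  ext
  simp

def incidentPairs {α : Type*} (T : Set (Sym2 α)) : Set (α × Sym2 α) := {p | p.2 ∈ T ∧ p.1 ∈ p.2}

section IncidentPairs

variable {α : Type*} {T : Set (Sym2 α)}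

theorem ncard_incidentPairs_fiber (hdiag : ∀ b ∈ T, ¬b.IsDiag) {b : Sym2 α} (hb : b ∈ T) :
    {p ∈ incidentPairs T | p.2 = b}.ncard = 2 := by
  have : {p ∈ incidentPairs T | p.2 = b} = (·, b) '' {a | a ∈ b} := by
    ext ⟨a, c⟩
    simp only [incidentPairs, Set.mem_ofPred_eq, Set.mem_image, Prod.mk.injEq]
    constructor
    · rintro ⟨⟨-, ha⟩, rfl⟩
      exact ⟨a, ha, rfl, rfl⟩
    · rintro ⟨a, ha, rfl, rfl⟩
      exact ⟨⟨hb, ha⟩, rfl⟩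
  rw [this, Set.ncard_image_of_injective _ (Prod.mk_left_injective b),
    Sym2.ncard_setOf_mem_of_not_isDiag (hdiag b hb)]

theorem incidentPairs_finite (hT : T.Finite) (hdiag : ∀ b ∈ T, ¬b.IsDiag) :
    (incidentPairs T).Finite :=
  .of_mapsTo_of_ncard_fiber two_ne_zero hT (fun _ hp => hp.1)
    fun _ => ncard_incidentPairs_fiber hdiag

theorem ncard_incidentPairs (hT : T.Finite) (hdiag : ∀ b ∈ T, ¬b.IsDiag) :
    (incidentPairs T).ncard = T.ncard * 2 :=
  Set.ncard_eq_ncard_mul_of_ncard_fiber two_ne_zero hT (fun _ hp => hp.1)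
    fun _ => ncard_incidentPairs_fiber hdiag

end IncidentPairs

theorem latAdj_symm {v w : ℤ × ℤ} (h : latAdj v w) : latAdj w v := by
  unfold latAdj at *
  omega

theorem latAdj_irrefl (v : ℤ × ℤ) : ¬latAdj v v := by
  unfold latAdj
  omega

theorem setOf_latAdj_eq (v : ℤ × ℤ) :
    {w | latAdj v w} = (v + ·) '' {(1, 0), (-1, 0), (0, 1), (0, -1)} := by
  ext ⟨a, b⟩
  simp only [latAdj, Set.mem_ofPred_eq, Set.image_insert_eq, Set.image_singleton,
    Set.mem_insert_iff, Set.mem_singleton_iff, Prod.ext_iff, Prod.fst_add, Prod.snd_add]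
  omega

theorem ncard_setOf_latAdj (v : ℤ × ℤ) : {w | latAdj v w}.ncard = 4 := by
  rw [setOf_latAdj_eq, Set.ncard_image_of_injective _ (add_right_injective v)]
  simp [Set.ncard_insert_of_notMem, Set.ncard_singleton]

theorem isBond.not_isDiag {b : Sym2 (ℤ × ℤ)} (hb : isBond b) : ¬b.IsDiag := by
  obtain ⟨v, w, hvw, rfl⟩ := hb
  rw [Sym2.mk_isDiag_iff]
  rintro rfl
  exact latAdj_irrefl v hvw

theorem isBond.exists_eq_mk_of_mem {b : Sym2 (ℤ × ℤ)} {v : ℤ × ℤ} (hb : isBond b) (hv : v ∈ b) :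
    ∃ w, latAdj v w ∧ b = s(v, w) := by
  obtain ⟨x, y, hxy, rfl⟩ := hb
  rcases Sym2.mem_iff.mp hv with rfl | rfl
  · exact ⟨y, hxy, rfl⟩
  · exact ⟨x, latAdj_symm hxy, Sym2.eq_swap⟩

theorem setOf_isBond_mem_eq (v : ℤ × ℤ) :
    {b | isBond b ∧ v ∈ b} = (fun w => s(v, w)) '' {w | latAdj v w} := by
  ext b
  constructor
  · rintro ⟨hb, hv⟩
    obtain ⟨w, hvw, rfl⟩ := hb.exists_eq_mk_of_mem hv
    exact ⟨w, hvw, rfl⟩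
  · rintro ⟨w, hvw, rfl⟩
    exact ⟨⟨v, w, hvw, rfl⟩, Sym2.mem_mk_left v w⟩

theorem ncard_setOf_isBond_mem (v : ℤ × ℤ) : {b | isBond b ∧ v ∈ b}.ncard = 4 := by
  rw [setOf_isBond_mem_eq, Set.ncard_image_of_injective _ fun _ _ => Sym2.congr_right.mp,
    ncard_setOf_latAdj]

theorem latSq_finite (n : ℕ) : (latSq n).Finite := by
  refine ((Set.finite_Icc (-(n : ℤ)) n).prod (Set.finite_Icc (-(n : ℤ)) n)).subset ?_
  rintro ⟨a, b⟩ ⟨ha, hb⟩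
  exact ⟨abs_le.mp ha, abs_le.mp hb⟩

theorem bonds_finite (n : ℕ) : (bonds n).Finite := by
  refine (((latSq_finite n).prod (latSq_finite n)).image (Function.uncurry Sym2.mk)).subset ?_
  rintro e ⟨⟨v, w, -, rfl⟩, hvw⟩
  exact ⟨(v, w), ⟨hvw v (Sym2.mem_mk_left v w), hvw w (Sym2.mem_mk_right v w)⟩, rfl⟩

theorem latSq_subset_succ (n : ℕ) : latSq n ⊆ latSq (n + 1) := by
  rintro v ⟨h1, h2⟩
  exact ⟨h1.trans (by omega), h2.trans (by omega)⟩

theorem latAdj.mem_latSq_succ {n : ℕ} {v w : ℤ × ℤ} (h : latAdj v w) (hv : v ∈ latSq n) :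
    w ∈ latSq (n + 1) := by
  obtain ⟨h1, h2⟩ := hv
  rw [abs_le] at h1 h2
  unfold latAdj at h
  exact ⟨abs_le.mpr (by omega), abs_le.mpr (by omega)⟩

theorem isBond.mem_bonds_succ {n : ℕ} {b : Sym2 (ℤ × ℤ)} {v : ℤ × ℤ} (hb : isBond b) (hv : v ∈ b)
    (hvn : v ∈ latSq n) : b ∈ bonds (n + 1) := by
  obtain ⟨w, hvw, rfl⟩ := hb.exists_eq_mk_of_mem hv
  refine ⟨hb, fun u hu => ?_⟩
  rcases Sym2.mem_iff.mp hu with rfl | rfl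
  · exact latSq_subset_succ n hvn
  · exact hvw.mem_latSq_succ hvn

def incidentBondPairs (V : Set (ℤ × ℤ)) : Set ((ℤ × ℤ) × Sym2 (ℤ × ℤ)) :=
  {p | p.1 ∈ V ∧ isBond p.2 ∧ p.1 ∈ p.2}

section IncidentBondPairs

variable {V : Set (ℤ × ℤ)}

theorem ncard_incidentBondPairs_fiber {v : ℤ × ℤ} (hv : v ∈ V) :
    {p ∈ incidentBondPairs V | p.1 = v}.ncard = 4 := by
  have : {p ∈ incidentBondPairs V | p.1 = v} = (v, ·) '' {b | isBond b ∧ v ∈ b} := by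
    ext ⟨w, b⟩
    simp only [incidentBondPairs, Set.mem_ofPred_eq, Set.mem_image, Prod.mk.injEq]
    constructor
    · rintro ⟨⟨-, hb, hw⟩, rfl⟩
      exact ⟨b, ⟨hb, hw⟩, rfl, rfl⟩
    · rintro ⟨b, ⟨hb, hvb⟩, rfl, rfl⟩
      exact ⟨⟨hv, hb, hvb⟩, rfl⟩
  rw [this, Set.ncard_image_of_injective _ (Prod.mk_right_injective v), ncard_setOf_isBond_mem]

theorem incidentBondPairs_finite (hV : V.Finite) : (incidentBondPairs V).Finite :=
  .of_mapsTo_of_ncard_fiber four_ne_zero hV (fun _ hp => hp.1)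
    fun _ => ncard_incidentBondPairs_fiber

theorem ncard_incidentBondPairs (hV : V.Finite) : (incidentBondPairs V).ncard = V.ncard * 4 :=
  Set.ncard_eq_ncard_mul_of_ncard_fiber four_ne_zero hV (fun _ hp => hp.1)
    fun _ => ncard_incidentBondPairs_fiber

end IncidentBondPairs

theorem incidentPairs_bonds_sdiff_touching (m : ℕ) (X : Set (Sym2 (ℤ × ℤ))) :
    incidentPairs (bonds m \ X) \ {p | ∃ e ∈ X, p.1 ∈ e} =
      incidentBondPairs {v ∈ latSq m | ∀ e ∈ X, v ∉ e} ∩ {p | p.2 ∈ bonds m} := by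
  ext ⟨i, b⟩
  simp only [incidentPairs, incidentBondPairs, Set.mem_sdiff, Set.mem_inter_iff,
    Set.mem_ofPred_eq, not_exists, not_and]
  constructor
  · rintro ⟨⟨⟨hb, -⟩, hib⟩, hfree⟩
    exact ⟨⟨⟨hb.2 i hib, hfree⟩, hb.1, hib⟩, hb⟩
  · rintro ⟨⟨⟨-, hfree⟩, -, hib⟩, hb⟩
    exact ⟨⟨⟨hb, fun hbX => hfree b hbX hib⟩, hib⟩, hfree⟩

theorem incidentBondPairs_untouched_sdiff_bonds {n : ℕ} {X : Set (Sym2 (ℤ × ℤ))}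
    (hX : X ⊆ bonds n) :
    incidentBondPairs {v ∈ latSq (n + 1) | ∀ e ∈ X, v ∉ e} \ {p | p.2 ∈ bonds (n + 1)} =
      {p | p.1 ∈ latSq (n + 1) ∧ isBond p.2 ∧ p.2 ∉ bonds (n + 1) ∧ p.1 ∈ p.2} := by
  ext ⟨i, b⟩
  simp only [incidentBondPairs, Set.mem_sdiff, Set.mem_ofPred_eq]
  constructor
  · rintro ⟨⟨⟨hi, -⟩, hb, hib⟩, hb_out⟩
    exact ⟨hi, hb, hb_out, hib⟩
  · rintro ⟨hi, hb, hb_out, hib⟩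
    refine ⟨⟨⟨hi, fun e he hie => hb_out ?_⟩, hb, hib⟩, hb_out⟩
    exact hb.mem_bonds_succ hib ((hX he).2 i hie)

/-- double-counting identity for a configuration `X` with
disordered boundary condition in the square `Λ_{n+1}`:
`2|B(Λ_{n+1})∖X| = 4κ₀ + Σ_{γ∈∂X}|γ| − |∂̄B(Λ_{n+1})|`. -/
theorem stmt_13 (n : ℕ) (X : Set (Sym2 (ℤ × ℤ))) (hX : X ⊆ bonds n) :
    2 * ((bonds (n + 1) \ X).ncard : ℤ) =
      4 * (({v ∈ latSq (n + 1) | ∀ e ∈ X, v ∉ e}).ncard : ℤ) +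
        (({p : (ℤ × ℤ) × Sym2 (ℤ × ℤ) |
            p.2 ∈ bonds (n + 1) \ X ∧ p.1 ∈ p.2 ∧ ∃ e ∈ X, p.1 ∈ e}).ncard : ℤ) -
        (({p : (ℤ × ℤ) × Sym2 (ℤ × ℤ) |
            p.1 ∈ latSq (n + 1) ∧ isBond p.2 ∧ p.2 ∉ bonds (n + 1) ∧ p.1 ∈ p.2}).ncard : ℤ) := by
  have hT : (bonds (n + 1) \ X).Finite := (bonds_finite (n + 1)).subset Set.sdiff_subset
  have hT_diag : ∀ b ∈ bonds (n + 1) \ X, ¬b.IsDiag := fun b hb => hb.1.1.not_isDiag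
  have hκ : {v ∈ latSq (n + 1) | ∀ e ∈ X, v ∉ e}.Finite :=
    (latSq_finite (n + 1)).subset (Set.sep_subset _ _)
  have hT_split := Set.ncard_inter_add_ncard_sdiff_eq_ncard _ {p | ∃ e ∈ X, p.1 ∈ e}
    (incidentPairs_finite hT hT_diag)
  have hκ_split := Set.ncard_inter_add_ncard_sdiff_eq_ncard _ {p | p.2 ∈ bonds (n + 1)}
    (incidentBondPairs_finite hκ)
  have h_touching : incidentPairs (bonds (n + 1) \ X) ∩ {p | ∃ e ∈ X, p.1 ∈ e} =
      {p | p.2 ∈ bonds (n + 1) \ X ∧ p.1 ∈ p.2 ∧ ∃ e ∈ X, p.1 ∈ e} := by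
    ext p
    simp only [incidentPairs, Set.mem_inter_iff, Set.mem_ofPred_eq, and_assoc]
  rw [h_touching, incidentPairs_bonds_sdiff_touching, ncard_incidentPairs hT hT_diag] at hT_split
  rw [incidentBondPairs_untouched_sdiff_bonds hX, ncard_incidentBondPairs hκ] at hκ_split
  omega
end
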